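/- For natural numbers m, n ≥ 1, the graph D_{m,n} has domination number m + 1, eternal domination number m + 2, and autonomous domination number m + n + 1. -/

import Mathlib

/-!
Every dominating set guards each pendant edge `b_i^1 b_i^2` and meets the clique
`{a_2, c_1, …, c_n}`, so `γ ≥ m + 1`; covering the graph by `m + 2` cliques gives `γ_∞ ≤ m + 2`.

The lower bounds rest on the *exposed* sets: `a_1` is free, no pendant edge carries two guards,
and no `c_j` is occupied when `a_2` is. An attack on `a_1` cannot be answered from an exposed set,
and an exposed set has at most `m + n` guards.
In an eternal family with `m + 1` guards, a member with the fewest guards on the `b_i^1` is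
exposed: an attack on `b_i^2` can only be answered from `b_i^1`.
An autonomous family is closed under dominating moves, so with `m + n` guards a member
minimising the total distance of its guards to `{c_1, …, c_n}` admits no dominating move that
brings a guard closer, and this forces it to be exposed.
Conversely, as exposed sets are small, every dominating set of `m + n + 1` guards is secure,
so these sets form an autonomous family.
-/

open SimpleGraph

variable {V : Type*} [DecidableEq V]

/-- `S` is a dominating set of `G`. -/
def Dominates (G : SimpleGraph V) (S : Finset V) : Prop :=
  ∀ v : V, v ∈ S ∨ ∃ u ∈ S, G.Adj u v

/-- Dominating sets `S` and `S'` are adjacent: they differ by moving one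
guard along an edge of `G`. -/
def AdjacentSets (G : SimpleGraph V) (S S' : Finset V) : Prop :=
  ∃ v v', v ∈ S ∧ v' ∉ S ∧ G.Adj v v' ∧ S' = insert v' (S.erase v)

/-- `S` is a secure dominating set. -/
def SecureDominating (G : SimpleGraph V) (S : Finset V) : Prop :=
  Dominates G S ∧ ∀ v ∉ S, ∃ S', Dominates G S' ∧ AdjacentSets G S S' ∧ v ∈ S'

/-- An autonomously dominating family. -/
def AutFamily (G : SimpleGraph V) (F : Set (Finset V)) : Prop :=
  (∀ S ∈ F, Dominates G S) ∧
  (∀ S ∈ F, ∀ v ∉ S, ∃ S' ∈ F, AdjacentSets G S S' ∧ v ∈ S') ∧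
  (∀ S ∈ F, ∀ S', Dominates G S' → AdjacentSets G S S' → S' ∈ F)

/-- An autonomously dominating set. -/
def AutDomSet (G : SimpleGraph V) (S : Finset V) : Prop :=
  ∃ F, AutFamily G F ∧ S ∈ F

/-- The autonomous domination number. -/
noncomputable def autDomNum (G : SimpleGraph V) : ℕ :=
  sInf {k | ∃ S : Finset V, AutDomSet G S ∧ S.card = k}

/-- An eternally dominating family (no closure condition). -/
def EternalFamily (G : SimpleGraph V) (F : Set (Finset V)) : Prop :=
  (∀ S ∈ F, Dominates G S) ∧
  (∀ S ∈ F, ∀ v ∉ S, ∃ S' ∈ F, AdjacentSets G S S' ∧ v ∈ S')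

/-- The eternal domination number. -/
noncomputable def eternalDomNum (G : SimpleGraph V) : ℕ :=
  sInf {k | ∃ (F : Set (Finset V)) (S : Finset V),
    EternalFamily G F ∧ S ∈ F ∧ S.card = k}

/-- The domination number. -/
noncomputable def domNum (G : SimpleGraph V) : ℕ :=
  sInf {k | ∃ S : Finset V, Dominates G S ∧ S.card = k}

/-- The graph `D_{m,n}`: vertices `a_1, a_2` (`Sum.inl i`, with `a_2 = Sum.inl 1`),
`b_i^1 = Sum.inr (Sum.inl (i, 0))`, `b_i^2 = Sum.inr (Sum.inl (i, 1))` for `1 ≤ i ≤ m`,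
and `c_1, …, c_n` (`Sum.inr (Sum.inr _)`).  The set `{a_1, a_2, b_1^1, …, b_m^1}`
induces a complete subgraph, `b_i^1 ~ b_i^2`, `{a_2, c_1, …, c_n}` induces a complete
subgraph, and there are no other edges. -/
def graphD (m n : ℕ) : SimpleGraph (Fin 2 ⊕ (Fin m × Fin 2) ⊕ Fin n) :=
  SimpleGraph.fromRel (fun x y => match x, y with
    | .inl _, .inl _ => True
    | .inl _, .inr (.inl (_, k)) => k = 0
    | .inr (.inl (_, k)), .inl _ => k = 0
    | .inl i, .inr (.inr _) => i = 1
    | .inr (.inl (i, k)), .inr (.inl (j, l)) => (k = 0 ∧ l = 0) ∨ i = j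
    | .inr (.inr _), .inr (.inr _) => True
    | _, _ => False)


section General

variable {G : SimpleGraph V} {S S' T : Finset V} {F : Set (Finset V)}

theorem AdjacentSets.card_eq (h : AdjacentSets G S S') : S'.card = S.card := by
  obtain ⟨u, v, hu, hv, -, rfl⟩ := h
  rw [Finset.card_insert_of_notMem fun h => hv (Finset.mem_of_mem_erase h),
    Finset.card_erase_add_one hu]

theorem AdjacentSets.exists_eq_insert_erase (h : AdjacentSets G S S') {v : V} (hv : v ∉ S)
    (hv' : v ∈ S') : ∃ u ∈ S, G.Adj u v ∧ S' = insert v (S.erase u) := by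
  obtain ⟨u, w, hu, -, huw, rfl⟩ := h
  obtain rfl | hw := Finset.mem_insert.mp hv'
  · exact ⟨u, hu, huw, rfl⟩
  · exact absurd (Finset.mem_of_mem_erase hw) hv

theorem secureDominating_iff : SecureDominating G S ↔ Dominates G S ∧
    ∀ v ∉ S, ∃ u ∈ S, G.Adj u v ∧ Dominates G (insert v (S.erase u)) := by
  refine and_congr_right fun _ => forall₂_congr fun v hv => ⟨?_, ?_⟩
  · rintro ⟨S', hS', hadj, hvS'⟩
    obtain ⟨u, hu, huv, rfl⟩ := hadj.exists_eq_insert_erase hv hvS'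
    exact ⟨u, hu, huv, hS'⟩
  · rintro ⟨u, hu, huv, hS'⟩
    exact ⟨_, hS', ⟨u, v, hu, hv, huv, rfl⟩, Finset.mem_insert_self v _⟩

theorem EternalFamily.secureDominating (hF : EternalFamily G F) (hS : S ∈ F) :
    SecureDominating G S := by
  refine ⟨hF.1 S hS, fun v hv => ?_⟩
  obtain ⟨S', hS'F, hadj, hv'⟩ := hF.2 S hS v hv
  exact ⟨S', hF.1 S' hS'F, hadj, hv'⟩

theorem AutFamily.eternalFamily (hF : AutFamily G F) : EternalFamily G F := ⟨hF.1, hF.2.1⟩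

theorem sum_insert_erase_lt {w : V → ℕ} {u v : V} (hu : u ∈ S) (hv : v ∉ S)
    (h : w v < w u) : ∑ x ∈ insert v (S.erase u), w x < ∑ x ∈ S, w x := by
  rw [Finset.sum_insert fun h => hv (Finset.mem_of_mem_erase h), ← Finset.add_sum_erase S w hu]
  omega

theorem EternalFamily.exists_mem_forall_le (hF : EternalFamily G F) (hT : T ∈ F) (w : V → ℕ) :
    ∃ S ∈ F, S.card = T.card ∧ ∀ v ∉ S, ∃ u ∈ S, G.Adj u v ∧ w u ≤ w v := by
  obtain ⟨S, ⟨hSF, hST⟩, hmin⟩ := (measure fun S : Finset V => ∑ x ∈ S, w x).wf.has_min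
    {S | S ∈ F ∧ S.card = T.card} ⟨T, hT, rfl⟩
  refine ⟨S, hSF, hST, fun v hv => ?_⟩
  obtain ⟨S', hS'F, hadj, hvS'⟩ := hF.2 S hSF v hv
  obtain ⟨u, hu, huv, rfl⟩ := hadj.exists_eq_insert_erase hv hvS'
  exact ⟨u, hu, huv, not_lt.mp fun hlt =>
    hmin _ ⟨hS'F, hadj.card_eq.trans hST⟩ (sum_insert_erase_lt hu hv hlt)⟩

theorem AutFamily.exists_mem_forall_not_dominates (hF : AutFamily G F) (hT : T ∈ F)
    (w : V → ℕ) : ∃ S ∈ F, S.card = T.card ∧ ∀ u ∈ S, ∀ v ∉ S, G.Adj u v → w v < w u →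
      ¬ Dominates G (insert v (S.erase u)) := by
  obtain ⟨S, ⟨hSF, hST⟩, hmin⟩ := (measure fun S : Finset V => ∑ x ∈ S, w x).wf.has_min
    {S | S ∈ F ∧ S.card = T.card} ⟨T, hT, rfl⟩
  refine ⟨S, hSF, hST, fun u hu v hv huv hlt hdom => ?_⟩
  have hadj : AdjacentSets G S (insert v (S.erase u)) := ⟨u, v, hu, hv, huv, rfl⟩
  exact hmin _ ⟨hF.2.2 S hSF _ hdom hadj, hadj.card_eq.trans hST⟩
    (sum_insert_erase_lt hu hv hlt)

theorem autFamily_of_secureDominating {k : ℕ}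
    (h : ∀ S : Finset V, Dominates G S → S.card = k → SecureDominating G S) :
    AutFamily G {S | Dominates G S ∧ S.card = k} := by
  refine ⟨fun S hS => hS.1, fun S hS v hv => ?_,
    fun S hS S' hS' hadj => ⟨hS', hadj.card_eq.trans hS.2⟩⟩
  obtain ⟨S', hS', hadj, hv'⟩ := (h S hS.1 hS.2).2 v hv
  exact ⟨S', ⟨hS', hadj.card_eq.trans hS.2⟩, hadj, hv'⟩

theorem exists_eternalFamily_of_cliqueCover {ι : Type*} [Fintype ι] (p : V → ι)
    (hp : Function.Surjective p) (hclique : ∀ i, G.IsClique (p ⁻¹' {i})) :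
    ∃ F, EternalFamily G F ∧ ∃ S ∈ F, S.card = Fintype.card ι := by
  refine ⟨{S | ∀ i, ∃! x, x ∈ S ∧ p x = i}, ⟨fun S hS v => ?_, fun S hS v hv => ?_⟩,
    Finset.univ.image (Function.surjInv hp), fun i => ?_, ?_⟩
  · obtain ⟨x, ⟨hx, hpx⟩, -⟩ := hS (p v)
    by_cases hxv : x = v
    · exact .inl (hxv ▸ hx)
    · exact .inr ⟨x, hx, hclique (p v) hpx rfl hxv⟩
  · obtain ⟨x, ⟨hx, hpx⟩, hxu⟩ := hS (p v)
    have hxv : x ≠ v := fun h => hv (h ▸ hx)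
    refine ⟨insert v (S.erase x), fun i => ?_, ⟨x, v, hx, hv, hclique (p v) hpx rfl hxv, rfl⟩,
      Finset.mem_insert_self v _⟩
    by_cases hi : p v = i
    · refine ⟨v, ⟨Finset.mem_insert_self v _, hi⟩, fun y ⟨hy, hpy⟩ => ?_⟩
      obtain rfl | hy := Finset.mem_insert.mp hy
      · rfl
      · exact absurd (hxu y ⟨Finset.mem_of_mem_erase hy, hpy.trans hi.symm⟩)
          (Finset.ne_of_mem_erase hy)
    · obtain ⟨y, ⟨hy, hpy⟩, hyu⟩ := hS i
      have hyx : y ≠ x := by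
        rintro rfl
        exact hi (hpx.symm.trans hpy)
      refine ⟨y, ⟨Finset.mem_insert_of_mem (Finset.mem_erase.mpr ⟨hyx, hy⟩), hpy⟩,
        fun z ⟨hz, hpz⟩ => ?_⟩
      obtain rfl | hz := Finset.mem_insert.mp hz
      · exact absurd hpz hi
      · exact hyu z ⟨Finset.mem_of_mem_erase hz, hpz⟩
  · refine ⟨Function.surjInv hp i, ⟨Finset.mem_image_of_mem _ (Finset.mem_univ i),
      Function.surjInv_eq hp i⟩, fun x ⟨hx, hpx⟩ => ?_⟩
    obtain ⟨j, -, rfl⟩ := Finset.mem_image.mp hx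
    rw [← hpx, Function.surjInv_eq hp j]
  · rw [Finset.card_image_of_injective _ (Function.injective_surjInv hp), Finset.card_univ]

end General

namespace GraphD

variable {m n : ℕ}

abbrev Vertex (m n : ℕ) := Fin 2 ⊕ (Fin m × Fin 2) ⊕ Fin n

abbrev a (i : Fin 2) : Vertex m n := .inl i
abbrev b (i : Fin m) (k : Fin 2) : Vertex m n := .inr (.inl (i, k))
abbrev c (j : Fin n) : Vertex m n := .inr (.inr j)

@[simp] lemma adj_a_a {i j : Fin 2} : (graphD m n).Adj (a i) (a j) ↔ i ≠ j := by
  simp [graphD]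

@[simp] lemma adj_a_b {i : Fin 2} {j : Fin m} {k : Fin 2} :
    (graphD m n).Adj (a i) (b j k) ↔ k = 0 := by
  simp [graphD]

@[simp] lemma adj_b_a {i : Fin 2} {j : Fin m} {k : Fin 2} :
    (graphD m n).Adj (b j k) (a i) ↔ k = 0 := by
  simp [graphD]

@[simp] lemma adj_a_c {i : Fin 2} {j : Fin n} : (graphD m n).Adj (a i) (c j) ↔ i = 1 := by
  simp [graphD]

@[simp] lemma adj_c_a {i : Fin 2} {j : Fin n} : (graphD m n).Adj (c j) (a i) ↔ i = 1 := by
  simp [graphD]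

@[simp] lemma adj_b_b {i j : Fin m} {k l : Fin 2} :
    (graphD m n).Adj (b i k) (b j l) ↔ (i, k) ≠ (j, l) ∧ (k = 0 ∧ l = 0 ∨ i = j) := by
  simp [graphD]
  tauto

@[simp] lemma not_adj_b_c {i : Fin m} {k : Fin 2} {j : Fin n} :
    ¬ (graphD m n).Adj (b i k) (c j) := by
  simp [graphD]

@[simp] lemma not_adj_c_b {i : Fin m} {k : Fin 2} {j : Fin n} :
    ¬ (graphD m n).Adj (c j) (b i k) := by
  simp [graphD]

@[simp] lemma adj_c_c {i j : Fin n} : (graphD m n).Adj (c i) (c j) ↔ i ≠ j := by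
  simp [graphD]

variable {S T U : Finset (Vertex m n)}

theorem dominates_iff : Dominates (graphD m n) S ↔
    (∀ i, b i 0 ∈ S ∨ b i 1 ∈ S) ∧ (a 0 ∈ S ∨ a 1 ∈ S ∨ ∃ i, b i 0 ∈ S) ∧
      (0 < n → a 1 ∈ S ∨ ∃ j, c j ∈ S) := by
  constructor
  · intro h
    refine ⟨fun i => ?_, ?_, fun hn => ?_⟩
    · obtain h | ⟨u, hu, hadj⟩ := h (b i 1)
      · exact .inr h
      · rcases u with x | ⟨j, l⟩ | j <;> simp at hadj
        obtain ⟨h1, rfl⟩ := hadj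
        fin_cases l <;> simp_all
    · obtain h | ⟨u, hu, hadj⟩ := h (a 0)
      · exact .inl h
      · rcases u with x | ⟨j, l⟩ | j <;> simp at hadj
        · fin_cases x <;> simp_all
        · subst hadj
          exact .inr (.inr ⟨j, hu⟩)
    · obtain h | ⟨u, hu, hadj⟩ := h (c ⟨0, hn⟩)
      · exact .inr ⟨_, h⟩
      · rcases u with x | ⟨j, l⟩ | j <;> simp at hadj
        · subst hadj
          exact .inl hu
        · exact .inr ⟨j, hu⟩
  · rintro ⟨hB, hK, hC⟩ v
    rcases v with x | ⟨i, k⟩ | j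
    · obtain h | h | ⟨i, h⟩ := hK <;> fin_cases x
      all_goals first | exact .inl h | exact .inr ⟨_, h, by simp⟩
    · obtain h | h := hB i <;> fin_cases k
      all_goals first | exact .inl h | exact .inr ⟨_, h, by simp⟩
    · obtain h | ⟨l, h⟩ := hC (Fin.pos j)
      · exact .inr ⟨_, h, by simp⟩
      · by_cases hl : l = j
        · exact .inl (hl ▸ h)
        · exact .inr ⟨_, h, by simpa using hl⟩

theorem add_card_le_card (hTU : T ⊆ U) (h : ∀ i, ∃ k, b i k ∈ U \ T) :
    m + T.card ≤ U.card := by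
  choose k hk using h
  have : m ≤ (U \ T).card := by
    simpa using Finset.card_le_card_of_injOn (s := Finset.univ) (fun i => b i (k i))
      (fun i _ => hk i) (fun i _ j _ hij => by simp_all)
  rw [← Finset.card_sdiff_add_card_eq_card hTU]
  omega

theorem le_card_of_dominates (hn : 0 < n) (hS : Dominates (graphD m n) S) :
    m + 1 ≤ S.card := by
  obtain ⟨hB, -, hC⟩ := dominates_iff.mp hS
  obtain ⟨z, hz, hzB⟩ : ∃ z ∈ S, ∀ i k, z ≠ b i k := by
    obtain h | ⟨j, h⟩ := hC hn
    exacts [⟨_, h, by simp⟩, ⟨_, h, by simp⟩]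
  simpa using add_card_le_card (T := {z}) (by simpa using hz) fun i => by
    obtain h | h := hB i
    exacts [⟨0, by simp [h, Ne.symm (hzB i 0)]⟩, ⟨1, by simp [h, Ne.symm (hzB i 1)]⟩]

def Exposed (S : Finset (Vertex m n)) : Prop :=
  a 0 ∉ S ∧ (∀ i, b i 0 ∈ S → b i 1 ∉ S) ∧ (a 1 ∈ S → ∀ j, c j ∉ S)

theorem Exposed.not_secureDominating (hn : 0 < n) (hS : Exposed S) :
    ¬ SecureDominating (graphD m n) S := by
  obtain ⟨ha0, hB, hC⟩ := hS
  rw [secureDominating_iff]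
  rintro ⟨-, hsec⟩
  obtain ⟨u, hu, hadj, hdom⟩ := hsec (a 0) ha0
  obtain ⟨hB', -, hC'⟩ := dominates_iff.mp hdom
  rcases u with x | ⟨i, k⟩ | j <;> simp at hadj
  · fin_cases x
    · simp at hadj
    · grind
  · subst hadj
    grind

theorem Exposed.card_le (hn : 0 < n) (hS : Exposed S) : S.card ≤ m + n := by
  obtain ⟨ha0, hB, hC⟩ := hS
  obtain ⟨x, hxS, hx⟩ : ∃ x ∉ S, x = a 1 ∨ x = c ⟨0, hn⟩ := by
    by_cases h : a 1 ∈ S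
    exacts [⟨_, hC h _, .inr rfl⟩, ⟨_, h, .inl rfl⟩]
  have hxB : ∀ i k, b i k ≠ x := by
    rintro i k rfl
    simp at hx
  have := add_card_le_card (T := {a 0, x}) (U := Sᶜ) (by simp [Finset.insert_subset_iff, *])
    fun i => by
      by_cases h : b i 0 ∈ S
      exacts [⟨1, by simp [hB i h, hxB]⟩, ⟨0, by simp [h, hxB]⟩]
  rw [Finset.card_compl, Finset.card_pair (by rintro rfl; simp at hx)] at this
  simp at this
  omega

theorem le_card_of_eternalFamily (hn : 0 < n) {F : Set (Finset (Vertex m n))}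
    (hF : EternalFamily (graphD m n) F) (hT : T ∈ F) : m + 2 ≤ T.card := by
  by_contra! hlt
  obtain ⟨S, hSF, hST, hdef⟩ :=
    hF.exists_mem_forall_le hT fun x => if ∃ i, x = b i 0 then 1 else 0
  obtain ⟨hB, -, hC⟩ := dominates_iff.mp (hF.1 S hSF)
  have htwo : ∀ x ∈ S, ∀ y ∈ S, x ≠ y → (∀ i, ∃ k, b i k ∈ S \ {x, y}) → False := by
    intro x hx y hy hxy h
    have := add_card_le_card (by simp [Finset.insert_subset_iff, hx, hy]) h
    rw [Finset.card_pair hxy] at this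
    omega
  have hpairs : ∀ x y, (∀ i k, b i k ≠ x) → (∀ i k, b i k ≠ y) →
      ∀ i, ∃ k, b i k ∈ S \ {x, y} := by
    intro x y hx hy i
    obtain h | h := hB i
    exacts [⟨0, by simp [h, hx, hy]⟩, ⟨1, by simp [h, hx, hy]⟩]
  obtain ⟨z, hz, hza, hzb⟩ : ∃ z ∈ S, z ≠ a 0 ∧ ∀ i k, b i k ≠ z := by
    obtain h | ⟨j, h⟩ := hC hn
    exacts [⟨_, h, by simp, by simp⟩, ⟨_, h, by simp, by simp⟩]
  have hB1 : ∀ i, b i 0 ∉ S := by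
    intro i hi0
    have hi1 : b i 1 ∉ S := fun hi1 => htwo _ hi0 _ hz (hzb i 0) fun j => by
      by_cases hji : j = i
      · exact ⟨1, by simp [hji, hi1, hzb]⟩
      · obtain h | h := hB j
        exacts [⟨0, by simp [h, hji, hzb]⟩, ⟨1, by simp [h, hzb]⟩]
    obtain ⟨u, hu, hadj, hw⟩ := hdef _ hi1
    rcases u with x | ⟨j, l⟩ | j <;> simp at hadj
    obtain ⟨hne, rfl⟩ := hadj
    fin_cases l
    · simp at hw
    · simp at hne
  refine (Exposed.not_secureDominating hn ⟨fun ha0 => ?_, fun i h => absurd h (hB1 i),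
    fun ha1 j hj => ?_⟩) (hF.secureDominating hSF)
  · exact htwo _ ha0 _ hz hza.symm (hpairs _ _ (by simp) hzb)
  · exact htwo _ ha1 _ hj (by simp) (hpairs _ _ (by simp) (by simp))

theorem exists_c_notMem (hS : Dominates (graphD m n) S) (hcard : S.card ≤ m + n)
    (ha : a 1 ∈ S) : ∃ j, c j ∉ S := by
  by_contra! hC
  have := add_card_le_card (T := insert (a 1) (Finset.univ.image c)) (U := S)
    (by grind) fun i => by
      obtain h | h := (dominates_iff.mp hS).1 i
      exacts [⟨0, by simp [h]⟩, ⟨1, by simp [h]⟩]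
  rw [Finset.card_insert_of_notMem (by simp),
    Finset.card_image_of_injective _ (fun i j h => by simpa using h)] at this
  simp at this
  omega

/-- The distance to the clique `{c_1, …, c_n}`. -/
def height : Vertex m n → ℕ
  | .inl i => 2 - i
  | .inr (.inl (_, k)) => 2 + k
  | .inr (.inr _) => 0

theorem exposed_of_forall_not_dominates (hm : 0 < m) (hS : Dominates (graphD m n) S)
    (hcard : S.card ≤ m + n) (hstuck : ∀ u ∈ S, ∀ v ∉ S, (graphD m n).Adj u v →
      height v < height u → ¬ Dominates (graphD m n) (insert v (S.erase u))) :
    Exposed S := by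
  obtain ⟨hB, hK, hC⟩ := dominates_iff.mp hS
  have hB1 : ∀ i, b i 0 ∈ S := by
    intro i
    by_contra h
    exact hstuck _ ((hB i).resolve_left h) _ h (by simp) (by simp [height])
      (dominates_iff.mpr (by grind))
  have ha1 : a 1 ∉ S := by
    intro ha1
    obtain ⟨j, hj⟩ := exists_c_notMem hS hcard ha1
    have := hB1 ⟨0, hm⟩
    exact hstuck _ ha1 _ hj (by simp) (by simp [height]) (dominates_iff.mpr (by grind))
  refine ⟨fun ha0 => hstuck _ ha0 _ ha1 (by simp) (by simp [height]) (dominates_iff.mpr ?_),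
    fun i hi0 hi1 => hstuck _ hi0 _ ha1 (by simp) (by simp [height]) (dominates_iff.mpr ?_),
    fun h => absurd h ha1⟩
  all_goals grind

theorem le_card_of_autFamily (hm : 0 < m) (hn : 0 < n) {F : Set (Finset (Vertex m n))}
    (hF : AutFamily (graphD m n) F) (hT : T ∈ F) : m + n + 1 ≤ T.card := by
  by_contra! hlt
  obtain ⟨S, hSF, hST, hstuck⟩ := hF.exists_mem_forall_not_dominates hT height
  exact (exposed_of_forall_not_dominates hm (hF.1 S hSF) (by omega) hstuck).not_secureDominating
    hn (hF.eternalFamily.secureDominating hSF)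

theorem secureDominating_of_card_eq (hn : 0 < n) (hS : Dominates (graphD m n) S)
    (hcard : S.card = m + n + 1) : SecureDominating (graphD m n) S := by
  have hexp : ¬ Exposed S := fun h => by
    have := h.card_le hn
    omega
  obtain ⟨hB, hK, hC⟩ := dominates_iff.mp hS
  refine secureDominating_iff.mpr ⟨hS, fun v hv => ?_⟩
  rcases v with x | ⟨i, k⟩ | j
  · fin_cases x
    · obtain ⟨i, hi0, hi1⟩ | ⟨ha1, j, hj⟩ :
          (∃ i, b i 0 ∈ S ∧ b i 1 ∈ S) ∨ a 1 ∈ S ∧ ∃ j, c j ∈ S := by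
        by_contra! h
        exact hexp ⟨hv, h.1, h.2⟩
      · exact ⟨b i 0, hi0, by simp, dominates_iff.mpr (by grind)⟩
      · exact ⟨a 1, ha1, by simp, dominates_iff.mpr (by grind)⟩
    · obtain ⟨j, hj⟩ := (hC hn).resolve_left hv
      exact ⟨c j, hj, by simp, dominates_iff.mpr (by grind)⟩
  · fin_cases k
    · exact ⟨b i 1, (hB i).resolve_left hv, by simp, dominates_iff.mpr (by grind)⟩
    · have hK' : a 0 ∈ S ∨ a 1 ∈ S ∨ ∃ j ≠ i, b j 0 ∈ S := by
        by_contra! h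
        exact hexp ⟨h.1, fun j hj => by grind, fun ha => absurd ha h.2.1⟩
      exact ⟨b i 0, (hB i).resolve_right hv, by simp, dominates_iff.mpr (by grind)⟩
  · by_cases hCS : ∃ l, c l ∈ S
    · obtain ⟨l, hl⟩ := hCS
      have hlj : l ≠ j := fun h => hv (h ▸ hl)
      exact ⟨c l, hl, by simpa using hlj, dominates_iff.mpr (by grind)⟩
    · have ha1 := (hC hn).resolve_right hCS
      have hK' : a 0 ∈ S ∨ ∃ i, b i 0 ∈ S := by
        by_contra! h
        exact hexp ⟨h.1, fun i hi => absurd hi (h.2 i), fun _ => not_exists.mp hCS⟩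
      exact ⟨a 1, ha1, by simp, dominates_iff.mpr (by grind)⟩

def cliqueIndex : Vertex m n → Fin m ⊕ Fin 2
  | .inl _ => .inr 0
  | .inr (.inl (i, _)) => .inl i
  | .inr (.inr _) => .inr 1

theorem isClique_cliqueIndex (i : Fin m ⊕ Fin 2) :
    (graphD m n).IsClique (cliqueIndex ⁻¹' {i}) := by
  intro x hx y hy hxy
  have h : cliqueIndex x = cliqueIndex y := hx.trans hy.symm
  clear hx hy
  rcases x with x | ⟨j, k⟩ | x <;> rcases y with y | ⟨l, k'⟩ | y <;> simp_all [cliqueIndex]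

theorem domNum_graphD (hn : 0 < n) : domNum (graphD m n) = m + 1 := by
  refine IsLeast.csInf_eq ⟨⟨insert (a 1) (Finset.univ.image (b · 0)),
    dominates_iff.mpr (by simp), ?_⟩, ?_⟩
  · rw [Finset.card_insert_of_notMem (by simp),
      Finset.card_image_of_injective _ fun i j h => by simpa using h, Finset.card_univ,
      Fintype.card_fin]
  · rintro k ⟨S, hS, rfl⟩
    exact le_card_of_dominates hn hS

theorem eternalDomNum_graphD (hn : 0 < n) : eternalDomNum (graphD m n) = m + 2 := by
  have hsurj : Function.Surjective (cliqueIndex (m := m) (n := n))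
    | .inl i => ⟨b i 0, rfl⟩
    | .inr i => ⟨if i = 0 then a 0 else c ⟨0, hn⟩, by fin_cases i <;> rfl⟩
  obtain ⟨F, hF, S, hSF, hS⟩ := exists_eternalFamily_of_cliqueCover _ hsurj isClique_cliqueIndex
  refine IsLeast.csInf_eq ⟨⟨F, S, hF, hSF, by simpa using hS⟩, ?_⟩
  rintro k ⟨F, S, hF, hSF, rfl⟩
  exact le_card_of_eternalFamily hn hF hSF

theorem autDomNum_graphD (hm : 0 < m) (hn : 0 < n) : autDomNum (graphD m n) = m + n + 1 := by
  let S : Finset (Vertex m n) :=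
    insert (a 1) (Finset.univ.image (b · 0) ∪ Finset.univ.image c)
  have hS : Dominates (graphD m n) S := dominates_iff.mpr (by simp [S])
  have hcard : S.card = m + n + 1 := by
    rw [Finset.card_insert_of_notMem (by simp),
      Finset.card_union_of_disjoint (by simp [Finset.disjoint_left]),
      Finset.card_image_of_injective _ fun i j h => by simpa using h,
      Finset.card_image_of_injective _ fun i j h => by simpa using h]
    simp
  refine IsLeast.csInf_eq ⟨⟨S, ⟨_, autFamily_of_secureDominating
    fun S hS hcard => secureDominating_of_card_eq hn hS hcard, hS, hcard⟩, hcard⟩, ?_⟩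
  rintro k ⟨S, ⟨F, hF, hSF⟩, rfl⟩
  exact le_card_of_autFamily hm hn hF hSF

end GraphD

/-- for `m, n ≥ 1`, `γ(D_{m,n}) = m + 1`, `γ_∞(D_{m,n}) = m + 2` and
`γ_aut(D_{m,n}) = m + n + 1`. -/
theorem graphD_parameters (m n : ℕ) (hm : 1 ≤ m) (hn : 1 ≤ n) :
    domNum (graphD m n) = m + 1 ∧ eternalDomNum (graphD m n) = m + 2 ∧
    autDomNum (graphD m n) = m + n + 1 :=
  ⟨GraphD.domNum_graphD hn, GraphD.eternalDomNum_graphD hn, GraphD.autDomNum_graphD hm hn⟩
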